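/- In the example instance, the polytope Q is not integral: Q has an extreme point (namely P, twelve of whose coordinates equal 1/2) that is not all of whose coordinates are 0 or 1. -/

import Mathlib

/-!
The point `P` is the only point of `Q` that vanishes wherever `P` does. This makes `P` extreme:
if `P = (y + z) / 2` with `y, z ∈ Q`, nonnegativity forces `y` and `z` to vanish wherever `P`
does, so `y = P = z`. Uniqueness on the support of `P` is a small linear computation: the flow
constraints give `CY(1,0,0) + CY(1,0,1) = 1`; at `t = 2` the linking constraints couple dike and
barrier heights diagonally, which gives `CY(1,0,0) = B(1,0,0)`; at `t = 1` they couple them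
anti-diagonally, which gives `CY(1,0,1) = B(1,0,0)`. Hence `CY(1,0,0) = 1/2`, and every other
coordinate follows.
-/

open Finset

/-- A point of the LP relaxation: `CY t d h1 h2`, `B t g1 g2`, `DY t d h g`,
with times in `Fin (T+1)`, dike heights in `Fin n`, barrier heights in `Fin m`. -/
structure DikePoint (T n m : ℕ) (D : Type) where
  CY : Fin (T + 1) → D → Fin n → Fin n → ℝ
  B : Fin (T + 1) → Fin m → Fin m → ℝ
  DY : Fin (T + 1) → D → Fin n → Fin m → ℝ

/-- Membership in the polytope `Q`: box constraints, support only on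
nondecreasing height pairs, initial conditions, flow conservation, and the
linking constraints. -/
def memQ {T n m : ℕ} {D : Type} [Fintype D] [NeZero n] [NeZero m]
    (x : DikePoint T n m D) : Prop :=
  (∀ t d h1 h2, x.CY t d h1 h2 ∈ Set.Icc (0 : ℝ) 1) ∧
  (∀ t g1 g2, x.B t g1 g2 ∈ Set.Icc (0 : ℝ) 1) ∧
  (∀ t d h g, x.DY t d h g ∈ Set.Icc (0 : ℝ) 1) ∧
  (∀ t d h1 h2, ¬ h1 ≤ h2 → x.CY t d h1 h2 = 0) ∧
  (∀ t g1 g2, ¬ g1 ≤ g2 → x.B t g1 g2 = 0) ∧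
  (∀ d, x.CY 0 d 0 0 = 1) ∧
  (∀ d h1 h2, 0 < h2 → x.CY 0 d h1 h2 = 0) ∧
  (x.B 0 0 0 = 1) ∧
  (∀ g1 g2, 0 < g2 → x.B 0 g1 g2 = 0) ∧
  (∀ (t : Fin T) (d : D) (h : Fin n),
    ∑ h1 ∈ Iic h, x.CY t.castSucc d h1 h = ∑ h3 ∈ Ici h, x.CY t.succ d h h3) ∧
  (∀ t d (h : Fin n), ∑ h1 ∈ Iic h, x.CY t d h1 h = ∑ g : Fin m, x.DY t d h g) ∧
  (∀ (t : Fin T) (g : Fin m),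
    ∑ g1 ∈ Iic g, x.B t.castSucc g1 g = ∑ g3 ∈ Ici g, x.B t.succ g g3) ∧
  (∀ t (d : D) (g : Fin m), ∑ g1 ∈ Iic g, x.B t g1 g = ∑ h : Fin n, x.DY t d h g)

/-- A point is integral if every coordinate is `0` or `1`. -/
def isIntegral {T n m : ℕ} {D : Type} (x : DikePoint T n m D) : Prop :=
  (∀ t d h1 h2, x.CY t d h1 h2 = 0 ∨ x.CY t d h1 h2 = 1) ∧
  (∀ t g1 g2, x.B t g1 g2 = 0 ∨ x.B t g1 g2 = 1) ∧
  (∀ t d h g, x.DY t d h g = 0 ∨ x.DY t d h g = 1)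

/-- The linear objective function of the LP relaxation. -/
def obj {T n m : ℕ} {D : Type} [Fintype D]
    (Dcost : Fin (T + 1) → D → Fin n → Fin n → ℝ)
    (Dexp : Fin (T + 1) → D → Fin n → Fin m → ℝ)
    (Bcost : Fin (T + 1) → Fin m → Fin m → ℝ)
    (Bexp : Fin (T + 1) → Fin m → ℝ)
    (x : DikePoint T n m D) : ℝ :=
  (∑ t, ∑ d, ∑ h2, ∑ h1 ∈ Iic h2, Dcost t d h1 h2 * x.CY t d h1 h2) +
  (∑ t, ∑ d, ∑ h, ∑ g, Dexp t d h g * x.DY t d h g) +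
  (∑ t, ∑ g2, ∑ g1 ∈ Iic g2, (Bcost t g1 g2 + Bexp t g2) * x.B t g1 g2)

/-- Condition (i). -/
def condI {T n m : ℕ} {D : Type}
    (Dexp : Fin (T + 1) → D → Fin n → Fin m → ℝ) : Prop :=
  ∀ (t : Fin (T + 1)) (d : D) (h h' : Fin n) (g g' : Fin m), h ≤ h' → g ≤ g' →
    Dexp t d h g + Dexp t d h' g' ≤ Dexp t d h' g + Dexp t d h g'

/-- Condition (ii). -/
def condII {T m : ℕ}
    (Bcost : Fin (T + 1) → Fin m → Fin m → ℝ) : Prop :=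
  ∀ (t : Fin (T + 1)) (g1 g1' g2 g2' : Fin m), g1 ≤ g1' → g1' ≤ g2 → g2 ≤ g2' →
    Bcost t g1 g2 + Bcost t g1' g2' ≤ Bcost t g1 g2' + Bcost t g1' g2

/-- Condition (iii). -/
def condIII {T n : ℕ} {D : Type}
    (Dcost : Fin (T + 1) → D → Fin n → Fin n → ℝ) : Prop :=
  ∀ (t : Fin (T + 1)) (d : D) (h1 h1' h2 h2' : Fin n), h1 ≤ h1' → h1' ≤ h2 → h2 ≤ h2' →
    Dcost t d h1 h2 + Dcost t d h1' h2' ≤ Dcost t d h1 h2' + Dcost t d h1' h2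

/-- A point `x` is an extreme point of the polytope `Q` if `x ∈ Q` and whenever
`y, z ∈ Q` satisfy `x = (y + z) / 2` (coordinatewise), then `y = z`. -/
def isExtremePoint {T n m : ℕ} {D : Type} [Fintype D] [NeZero n] [NeZero m]
    (x : DikePoint T n m D) : Prop :=
  memQ x ∧
    ∀ y z : DikePoint T n m D, memQ y → memQ z →
      ((∀ t d h1 h2, x.CY t d h1 h2 = (y.CY t d h1 h2 + z.CY t d h1 h2) / 2) ∧
       (∀ t g1 g2, x.B t g1 g2 = (y.B t g1 g2 + z.B t g1 g2) / 2) ∧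
       (∀ t d h g, x.DY t d h g = (y.DY t d h g + z.DY t d h g) / 2)) →
      y = z

namespace DikePoint

variable {T n m : ℕ} {D : Type}

theorem ext {x y : DikePoint T n m D} (hCY : x.CY = y.CY) (hB : x.B = y.B) (hDY : x.DY = y.DY) :
    x = y := by
  cases x; cases y; congr

def IsMidpoint (x y z : DikePoint T n m D) : Prop :=
  (∀ t d h1 h2, x.CY t d h1 h2 = (y.CY t d h1 h2 + z.CY t d h1 h2) / 2) ∧
  (∀ t g1 g2, x.B t g1 g2 = (y.B t g1 g2 + z.B t g1 g2) / 2) ∧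
  (∀ t d h g, x.DY t d h g = (y.DY t d h g + z.DY t d h g) / 2)

theorem IsMidpoint.symm {x y z : DikePoint T n m D} (h : IsMidpoint x y z) :
    IsMidpoint x z y := by
  obtain ⟨hCY, hB, hDY⟩ := h
  exact ⟨fun t d h1 h2 => by rw [hCY, add_comm], fun t g1 g2 => by rw [hB, add_comm],
    fun t d h g => by rw [hDY, add_comm]⟩

def SupportSubset (y x : DikePoint T n m D) : Prop :=
  (∀ t d h1 h2, x.CY t d h1 h2 = 0 → y.CY t d h1 h2 = 0) ∧
  (∀ t g1 g2, x.B t g1 g2 = 0 → y.B t g1 g2 = 0) ∧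
  (∀ t d h g, x.DY t d h g = 0 → y.DY t d h g = 0)

variable [Fintype D] [NeZero n] [NeZero m]

theorem supportSubset_of_isMidpoint {x y z : DikePoint T n m D} (hy : memQ y) (hz : memQ z)
    (hx : IsMidpoint x y z) : SupportSubset y x := by
  obtain ⟨hyC, hyB, hyD, -⟩ := hy
  obtain ⟨hzC, hzB, hzD, -⟩ := hz
  obtain ⟨hCY, hB, hDY⟩ := hx
  refine ⟨fun t d h1 h2 h0 => ?_, fun t g1 g2 h0 => ?_, fun t d h g h0 => ?_⟩
  · linarith [hCY t d h1 h2, (hyC t d h1 h2).1, (hzC t d h1 h2).1]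
  · linarith [hB t g1 g2, (hyB t g1 g2).1, (hzB t g1 g2).1]
  · linarith [hDY t d h g, (hyD t d h g).1, (hzD t d h g).1]

theorem isExtremePoint_of_forall_supportSubset {x : DikePoint T n m D} (hx : memQ x)
    (huniq : ∀ y, memQ y → SupportSubset y x → y = x) : isExtremePoint x := by
  refine ⟨hx, fun y z hy hz hmid => ?_⟩
  rw [huniq y hy (supportSubset_of_isMidpoint hy hz hmid),
    huniq z hz (supportSubset_of_isMidpoint hz hy (IsMidpoint.symm hmid))]

end DikePoint

open DikePoint

-- Each coordinate family is written as `![t][first height][second height]`.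
noncomputable def examplePoint : DikePoint 2 2 2 Unit where
  CY t _ := ![![![1, 0], ![0, 0]], ![![1/2, 1/2], ![0, 0]], ![![1/2, 0], ![0, 1/2]]] t
  B := ![![![1, 0], ![0, 0]], ![![1/2, 1/2], ![0, 0]], ![![1/2, 0], ![0, 1/2]]]
  DY t _ := ![![![1, 0], ![0, 0]], ![![0, 1/2], ![1/2, 0]], ![![1/2, 0], ![0, 1/2]]] t

theorem examplePoint_memQ : memQ examplePoint := by
  refine ⟨?_, ?_, ?_, ?_, ?_, ?_, ?_, ?_, ?_, ?_, ?_, ?_, ?_⟩ <;>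
    norm_num [examplePoint, Fin.forall_fin_succ, ← filter_ge_eq_Iic, ← filter_le_eq_Ici,
      sum_filter, Fin.sum_univ_two]

theorem eq_examplePoint_of_supportSubset {y : DikePoint 2 2 2 Unit} (hy : memQ y)
    (hsupp : y.SupportSubset examplePoint) : y = examplePoint := by
  obtain ⟨-, -, -, -, -, hC₀, -, hB₀, -, hflowC, hlinkC, hflowB, hlinkB⟩ := hy
  obtain ⟨hzC, hzB, hzD⟩ := hsupp
  simp only [examplePoint, Fin.forall_fin_succ, Unique.forall_iff, Fin.default_eq_zero,
    PUnit.default_eq_unit, Matrix.cons_val', Matrix.cons_val_fin_one, Matrix.cons_val_zero,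
    Matrix.cons_val_succ, Fin.succ_zero_eq_one, Fin.succ_one_eq_two, Fin.isValue, one_div,
    one_ne_zero, inv_eq_zero, OfNat.ofNat_ne_zero, IsEmpty.forall_iff, true_and,
    and_true, and_self] at hzC hzB hzD hC₀
  simp only [← filter_ge_eq_Iic, ← filter_le_eq_Ici, sum_filter, Fin.sum_univ_two,
    Fin.forall_fin_succ, Unique.forall_iff, Fin.default_eq_zero, PUnit.default_eq_unit,
    Fin.castSucc_zero, Fin.castSucc_succ, Fin.succ_zero_eq_one, Fin.succ_one_eq_two, Fin.isValue,
    Nat.reduceAdd, zero_le, le_refl, nonpos_iff_eq_zero, one_ne_zero, Fin.succ_ne_zero,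
    ↓reduceIte, add_zero, zero_add, and_true, hC₀, hB₀, hzC, hzB, hzD]
    at hflowC hlinkC hflowB hlinkB
  casesm* _ ∧ _
  have hdike : y.CY 1 () 0 0 + y.CY 1 () 0 1 = 1 := by linarith
  have hswap : y.CY 1 () 0 1 = y.B 1 0 0 := by linarith
  have hstay : y.CY 1 () 0 0 = y.B 1 0 0 := by linarith
  have hhalf : y.CY 1 () 0 0 = 1 / 2 := by linarith
  refine DikePoint.ext ?_ ?_ ?_
  · funext t d h₁ h₂
    fin_cases t <;> fin_cases d <;> fin_cases h₁ <;> fin_cases h₂ <;> simp [examplePoint] <;>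
      linarith
  · funext t g₁ g₂
    fin_cases t <;> fin_cases g₁ <;> fin_cases g₂ <;> simp [examplePoint] <;> linarith
  · funext t d h g
    fin_cases t <;> fin_cases d <;> fin_cases h <;> fin_cases g <;> simp [examplePoint] <;>
      linarith

theorem examplePoint_not_isIntegral : ¬ isIntegral examplePoint := by
  rintro ⟨hCY, -, -⟩
  rcases hCY 1 () 0 0 with h | h <;> norm_num [examplePoint] at h

/-- in the example instance (`T = 2`, one dike segment, two dike
heights, two barrier heights) the polytope `Q` is not integral: it has an
extreme point that is not integral. -/
theorem statement_2 :
    ∃ x : DikePoint 2 2 2 Unit, isExtremePoint x ∧ ¬ isIntegral x :=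
  ⟨examplePoint,
    isExtremePoint_of_forall_supportSubset examplePoint_memQ
      fun _ => eq_examplePoint_of_supportSubset,
    examplePoint_not_isIntegral⟩
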